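/- arXiv:2311.11044 — 2 statements merged into one kernel-verified Lean document; each statement's English description precedes it below -/
import Mathlib

section
/- Define μ_r : ℝ≥0 for r ≥ 1 by μ_1 = σ²/2, μ_2 = 2 ∫_0^1 (μ_1^t)² dt where μ_1^t = σ²/2, and μ_r = ∑_{i=1}^{r−1} C(r,i) ∫_0^1 μ_i^t μ_{r−i}^t dt with μ_i^t = i!(σ²/2)^i (1−t)^{i−1}. Then μ_r = r! (σ²/2)^r, i.e. μ_r equals the r-th moment of an exponential random variable with mean σ²/2. -/
/-!
Since `C(r, i) i! (r - i)! = r!` and `∫₀¹ (1 - t)^(r - 2) dt = 1 / (r - 1)`, each of the `r - 1`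
terms of the recursion equals `r! a^r / (r - 1)` independently of `i`, so their sum is `r! a^r`.
-/

open intervalIntegral

theorem integral_one_sub_pow (n : ℕ) : ∫ t in (0:ℝ)..1, (1 - t) ^ n = 1 / ((n : ℝ) + 1) := by
  rw [integral_comp_sub_left (fun u : ℝ => u ^ n) 1]
  norm_num [integral_pow]

theorem choose_mul_integral_moment_mul_moment (a : ℝ) {i r : ℕ} (hi : 1 ≤ i) (hir : i < r) :
    (r.choose i : ℝ) * ∫ t in (0:ℝ)..1,
        ((i.factorial : ℝ) * a ^ i * (1 - t) ^ (i - 1)) *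
        (((r - i).factorial : ℝ) * a ^ (r - i) * (1 - t) ^ (r - i - 1))
      = (r.factorial : ℝ) * a ^ r / ((r : ℝ) - 1) := by
  have hpow : ∀ t : ℝ,
      ((i.factorial : ℝ) * a ^ i * (1 - t) ^ (i - 1)) *
        (((r - i).factorial : ℝ) * a ^ (r - i) * (1 - t) ^ (r - i - 1))
      = ((i.factorial : ℝ) * ((r - i).factorial : ℝ) * (a ^ i * a ^ (r - i))) *
        (1 - t) ^ (r - 2) := by
    intro t
    rw [show r - 2 = (i - 1) + (r - i - 1) by omega, pow_add]
    ring
  have hfac : (r.choose i : ℝ) * i.factorial * (r - i).factorial = r.factorial := by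
    exact_mod_cast Nat.choose_mul_factorial_mul_factorial hir.le
  have hcast : ((r - 2 : ℕ) : ℝ) + 1 = (r : ℝ) - 1 := by
    rw [Nat.cast_sub (by omega)]
    ring
  simp_rw [hpow]
  rw [integral_const_mul, integral_one_sub_pow, hcast, ← pow_add, Nat.add_sub_cancel' hir.le,
    ← hfac]
  ring

theorem sum_choose_mul_integral_moment_mul_moment (a : ℝ) {r : ℕ} (hr : 2 ≤ r) :
    ∑ i ∈ Finset.Ico 1 r, (r.choose i : ℝ) * ∫ t in (0:ℝ)..1,
        ((i.factorial : ℝ) * a ^ i * (1 - t) ^ (i - 1)) *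
        (((r - i).factorial : ℝ) * a ^ (r - i) * (1 - t) ^ (r - i - 1))
      = (r.factorial : ℝ) * a ^ r := by
  rw [Finset.sum_congr rfl fun i hi => choose_mul_integral_moment_mul_moment a
      (Finset.mem_Ico.1 hi).1 (Finset.mem_Ico.1 hi).2,
    Finset.sum_const, Nat.card_Ico, nsmul_eq_mul, Nat.cast_sub (by omega)]
  have : (r : ℝ) - 1 ≠ 0 := by
    rw [sub_ne_zero]
    exact_mod_cast (by omega : r ≠ 1)
  field_simp
  push_cast
  ring

theorem stmt1_general (σ2 : ℝ) (μ : ℕ → ℝ)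
    (h1 : μ 1 = σ2 / 2)
    (h2 : μ 2 = 2 * ∫ _t in (0:ℝ)..1, (σ2 / 2) ^ 2)
    (hrec : ∀ r, 3 ≤ r → μ r = ∑ i ∈ Finset.Ico 1 r, (r.choose i : ℝ) *
      ∫ t in (0:ℝ)..1,
        ((Nat.factorial i : ℝ) * (σ2 / 2) ^ i * (1 - t) ^ (i - 1)) *
        ((Nat.factorial (r - i) : ℝ) * (σ2 / 2) ^ (r - i) * (1 - t) ^ (r - i - 1))) :
    ∀ r, 1 ≤ r → μ r = (Nat.factorial r : ℝ) * (σ2 / 2) ^ r := by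
  intro r hr
  obtain rfl | rfl | hr3 : r = 1 ∨ r = 2 ∨ 3 ≤ r := by omega
  · simpa using h1
  · simp [h2, Nat.factorial]
  · rw [hrec r hr3, sum_choose_mul_integral_moment_mul_moment _ (by omega)]

theorem stmt1 (σ2 : ℝ) (hσ : 0 < σ2) (μ : ℕ → ℝ)
    (h1 : μ 1 = σ2 / 2)
    (h2 : μ 2 = 2 * ∫ _t in (0:ℝ)..1, (σ2 / 2) ^ 2)
    (hrec : ∀ r, 3 ≤ r → μ r = ∑ i ∈ Finset.Ico 1 r, (r.choose i : ℝ) *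
      ∫ t in (0:ℝ)..1,
        ((Nat.factorial i : ℝ) * (σ2 / 2) ^ i * (1 - t) ^ (i - 1)) *
        ((Nat.factorial (r - i) : ℝ) * (σ2 / 2) ^ (r - i) * (1 - t) ^ (r - i - 1))) :
    ∀ r, 1 ≤ r → μ r = (Nat.factorial r : ℝ) * (σ2 / 2) ^ r :=
  stmt1_general σ2 μ h1 h2 hrec
end

section
/- Let f be the generating function of a probability distribution on ℕ with f'(1) = 1 and f''(1) = σ² ∈ (0,∞), and let f_{(n)} be the n-fold iterate. Then n(1 − f_{(n)}(0)) → 2/σ² as n → ∞ (Kolmogorov's estimate for critical Galton–Watson survival probability), provided p_1 ≠ 1. -/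
/-!
Write `1 - f s = (1 - s) A(s)` and `1 - A(s) = (1 - s) B(s)`, where `A` and `B` are power series
with nonnegative coefficients, continuous on `[0, 1]`, with `A 1 = f'(1) = 1` and
`B 1 = f''(1) / 2 = σ² / 2`. For `q n = f^[n] 0` and `d n = 1 - q n` this gives
`1 / d (n + 1) - 1 / d n = B (q n) / A (q n)`. These increments are at least `p k > 0` for some
`k ≥ 2`, so `1 / d n → ∞` and `q n → 1`; by continuity the increments then tend to `σ² / 2`, and by
Cesàro `1 / (n d n) → σ² / 2`.
-/

open Filter Finset Set Topology

theorem summable_of_tsum_ne_zero {ι α : Type*} [AddCommMonoid α] [TopologicalSpace α]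
    {f : ι → α} (h : ∑' i, f i ≠ 0) : Summable f :=
  by_contra fun hf => h (tsum_eq_zero_of_not_summable hf)

section Telescoping

variable {d : ℕ → ℝ}

theorem tendsto_zero_of_le_inv_sub_inv {c : ℝ} (hc : 0 < c)
    (h : ∀ n, c ≤ (d (n + 1))⁻¹ - (d n)⁻¹) : Tendsto d atTop (𝓝 0) := by
  have hlin : ∀ n : ℕ, (d 0)⁻¹ + n * c ≤ (d n)⁻¹ := by
    intro n
    induction n with
    | zero => simp
    | succ n ih => push_cast; linarith [h n]
  have hinv : Tendsto (fun n => (d n)⁻¹) atTop atTop :=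
    tendsto_atTop_mono hlin <| tendsto_atTop_add_const_left _ _ <|
      tendsto_natCast_atTop_atTop.atTop_mul_const hc
  exact (tendsto_inv_atTop_zero.comp hinv).congr fun n => inv_inv (d n)

theorem tendsto_natCast_mul_of_tendsto_inv_sub_inv {γ : ℝ} (hγ : γ ≠ 0)
    (h : Tendsto (fun n => (d (n + 1))⁻¹ - (d n)⁻¹) atTop (𝓝 γ)) :
    Tendsto (fun n : ℕ => n * d n) atTop (𝓝 γ⁻¹) := by
  have hmean : Tendsto (fun n : ℕ => (n : ℝ)⁻¹ * ((d n)⁻¹ - (d 0)⁻¹) + (n : ℝ)⁻¹ * (d 0)⁻¹)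
      atTop (𝓝 γ) := by
    simpa [sum_range_sub (fun n => (d n)⁻¹)] using
      h.cesaro.add (tendsto_inv_atTop_nhds_zero_nat.mul_const (d 0)⁻¹)
  have hinv : Tendsto (fun n : ℕ => ((n : ℝ) * d n)⁻¹) atTop (𝓝 γ) :=
    hmean.congr fun n => by rw [mul_inv]; ring
  simpa using hinv.inv₀ hγ

end Telescoping

theorem tendsto_natCast_mul_one_sub_iterate {f g : ℝ → ℝ} {c γ : ℝ} (hc : 0 < c) (hγ : γ ≠ 0)
    (hmaps : MapsTo f (Ico 0 1) (Ico 0 1))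
    (hg : ∀ s ∈ Ico (0 : ℝ) 1, (1 - f s)⁻¹ - (1 - s)⁻¹ = g s)
    (hcg : ∀ s ∈ Ico (0 : ℝ) 1, c ≤ g s) (hg1 : Tendsto g (𝓝[<] 1) (𝓝 γ)) :
    Tendsto (fun n : ℕ => n * (1 - f^[n] 0)) atTop (𝓝 γ⁻¹) := by
  have hmem : ∀ n, f^[n] 0 ∈ Ico (0 : ℝ) 1 := fun n => hmaps.iterate n ⟨le_rfl, one_pos⟩
  have hstep : ∀ n, (1 - f^[n + 1] 0)⁻¹ - (1 - f^[n] 0)⁻¹ = g (f^[n] 0) := fun n => by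
    rw [Function.iterate_succ_apply', hg _ (hmem n)]
  have hd0 : Tendsto (fun n => 1 - f^[n] 0) atTop (𝓝 0) :=
    tendsto_zero_of_le_inv_sub_inv hc fun n => hstep n ▸ hcg _ (hmem n)
  have hq1 : Tendsto (fun n => f^[n] 0) atTop (𝓝[<] 1) := by
    refine tendsto_nhdsWithin_iff.mpr ⟨?_, Eventually.of_forall fun n => (hmem n).2⟩
    simpa using tendsto_const_nhds.sub hd0 (a := (1 : ℝ))
  exact tendsto_natCast_mul_of_tendsto_inv_sub_inv hγ <|
    (hg1.comp hq1).congr fun n => (hstep n).symm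

theorem inv_one_sub_sub_inv_one_sub {s y a b : ℝ} (hs : s ≠ 1) (ha : a ≠ 0)
    (hy : 1 - y = (1 - s) * a) (ha' : 1 - a = (1 - s) * b) :
    (1 - y)⁻¹ - (1 - s)⁻¹ = b / a := by
  have hs' : 1 - s ≠ 0 := sub_ne_zero.mpr hs.symm
  rw [hy]
  field_simp
  linear_combination ha'

theorem natCast_sub_geom_sum {R : Type*} [CommRing R] (x : R) (n : ℕ) :
    (n : R) - ∑ i ∈ range n, x ^ i = (1 - x) * ∑ j ∈ range n, ∑ i ∈ range j, x ^ i := by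
  rw [mul_sum]
  simp only [mul_neg_geom_sum, sum_sub_distrib, sum_const, card_range, nsmul_eq_mul, mul_one]

section GeomSum

variable {s : ℝ}

theorem geom_sum_le_of_mem_Icc (hs : s ∈ Icc (0 : ℝ) 1) (n : ℕ) :
    ∑ i ∈ range n, s ^ i ≤ n := by
  simpa using sum_le_sum fun i (_ : i ∈ range n) => pow_le_one₀ hs.1 hs.2

theorem sum_geom_sum_le_sq_of_mem_Icc (hs : s ∈ Icc (0 : ℝ) 1) (n : ℕ) :
    ∑ j ∈ range n, ∑ i ∈ range j, s ^ i ≤ (n : ℝ) ^ 2 :=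
  calc ∑ j ∈ range n, ∑ i ∈ range j, s ^ i ≤ ∑ _j ∈ range n, (n : ℝ) :=
        sum_le_sum fun j hj => (geom_sum_le_of_mem_Icc hs j).trans
          (by exact_mod_cast (mem_range.mp hj).le)
    _ = (n : ℝ) ^ 2 := by simp [sq]

theorem sum_geom_sum_one (n : ℕ) :
    ∑ j ∈ range n, ∑ i ∈ range j, (1 : ℝ) ^ i = n * (n - 1) / 2 := by
  induction n with
  | zero => simp
  | succ n ih => rw [sum_range_succ, ih]; simp; ring

end GeomSum

theorem summable_mul_of_nonneg_of_le {p g w : ℕ → ℝ} (hp : ∀ l, 0 ≤ p l)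
    (hg : ∀ l, 0 ≤ g l) (hgw : ∀ l, g l ≤ w l) (hw : Summable fun l => w l * p l) :
    Summable fun l => p l * g l :=
  hw.of_nonneg_of_le (fun l => mul_nonneg (hp l) (hg l))
    fun l => by rw [mul_comm]; exact mul_le_mul_of_nonneg_right (hgw l) (hp l)

/-- `(1 - f s) / (1 - s)` for the generating function `f s = ∑ p l * s ^ l`, as a power series. -/
noncomputable def pgfDiffQuot (p : ℕ → ℝ) (s : ℝ) : ℝ :=
  ∑' l, p l * ∑ i ∈ range l, s ^ i

/-- `(f s - s) / (1 - s) ^ 2` for the generating function `f s = ∑ p l * s ^ l` of mean one,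
as a power series. -/
noncomputable def pgfSecondDiffQuot (p : ℕ → ℝ) (s : ℝ) : ℝ :=
  ∑' l, p l * ∑ j ∈ range l, ∑ i ∈ range j, s ^ i

section DiffQuot

variable {p : ℕ → ℝ} {s : ℝ}

theorem summable_mul_geom_sum (hp : ∀ l, 0 ≤ p l) (hL : Summable fun l : ℕ => l * p l)
    (hs : s ∈ Icc (0 : ℝ) 1) : Summable fun l => p l * ∑ i ∈ range l, s ^ i :=
  summable_mul_of_nonneg_of_le hp (fun l => by have := hs.1; positivity)
    (geom_sum_le_of_mem_Icc hs) hL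

theorem summable_mul_sum_geom_sum (hp : ∀ l, 0 ≤ p l)
    (hL2 : Summable fun l : ℕ => (l : ℝ) ^ 2 * p l) (hs : s ∈ Icc (0 : ℝ) 1) :
    Summable fun l => p l * ∑ j ∈ range l, ∑ i ∈ range j, s ^ i :=
  summable_mul_of_nonneg_of_le hp (fun l => by have := hs.1; positivity)
    (sum_geom_sum_le_sq_of_mem_Icc hs) hL2

theorem tsum_sub_tsum_mul_pow_eq_mul_pgfDiffQuot (hp : ∀ l, 0 ≤ p l) (hP : Summable p)
    (hs : s ∈ Icc (0 : ℝ) 1) :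
    ∑' l, p l - ∑' l, p l * s ^ l = (1 - s) * pgfDiffQuot p s := by
  have hpow : Summable fun l => p l * s ^ l :=
    summable_mul_of_nonneg_of_le hp (fun l => pow_nonneg hs.1 l)
      (fun l => pow_le_one₀ hs.1 hs.2) (by simpa using hP)
  rw [← hP.tsum_sub hpow, pgfDiffQuot, ← tsum_mul_left]
  congr 1 with l
  rw [mul_left_comm, mul_neg_geom_sum]
  ring

theorem tsum_mul_sub_pgfDiffQuot_eq_mul_pgfSecondDiffQuot (hp : ∀ l, 0 ≤ p l)
    (hL : Summable fun l : ℕ => l * p l) (hs : s ∈ Icc (0 : ℝ) 1) :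
    ∑' l : ℕ, l * p l - pgfDiffQuot p s = (1 - s) * pgfSecondDiffQuot p s := by
  rw [pgfDiffQuot, ← hL.tsum_sub (summable_mul_geom_sum hp hL hs), pgfSecondDiffQuot,
    ← tsum_mul_left]
  congr 1 with l
  rw [mul_left_comm, ← natCast_sub_geom_sum]
  ring

theorem pgfDiffQuot_one (p : ℕ → ℝ) : pgfDiffQuot p 1 = ∑' l : ℕ, l * p l := by
  simp [pgfDiffQuot, mul_comm]

theorem pgfSecondDiffQuot_one (p : ℕ → ℝ) :
    pgfSecondDiffQuot p 1 = (∑' l : ℕ, l * (l - 1) * p l) / 2 := by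
  rw [pgfSecondDiffQuot, ← tsum_div_const]
  congr 1 with l
  rw [sum_geom_sum_one]
  ring

theorem continuousOn_pgfDiffQuot (hp : ∀ l, 0 ≤ p l) (hL : Summable fun l : ℕ => l * p l) :
    ContinuousOn (pgfDiffQuot p) (Icc 0 1) := by
  refine continuousOn_tsum (fun l => by fun_prop) hL fun l s hs => ?_
  rw [Real.norm_of_nonneg (mul_nonneg (hp l) (by have := hs.1; positivity)), mul_comm (l : ℝ)]
  exact mul_le_mul_of_nonneg_left (geom_sum_le_of_mem_Icc hs l) (hp l)

theorem continuousOn_pgfSecondDiffQuot (hp : ∀ l, 0 ≤ p l)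
    (hL2 : Summable fun l : ℕ => (l : ℝ) ^ 2 * p l) :
    ContinuousOn (pgfSecondDiffQuot p) (Icc 0 1) := by
  refine continuousOn_tsum (fun l => by fun_prop) hL2 fun l s hs => ?_
  rw [Real.norm_of_nonneg (mul_nonneg (hp l) (by have := hs.1; positivity)),
    mul_comm ((l : ℝ) ^ 2)]
  exact mul_le_mul_of_nonneg_left (sum_geom_sum_le_sq_of_mem_Icc hs l) (hp l)

theorem tendsto_pgfSecondDiffQuot_div_pgfDiffQuot (hp : ∀ l, 0 ≤ p l)
    (hL : Summable fun l : ℕ => l * p l) (hL2 : Summable fun l : ℕ => (l : ℝ) ^ 2 * p l)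
    (h1 : pgfDiffQuot p 1 ≠ 0) :
    Tendsto (fun s => pgfSecondDiffQuot p s / pgfDiffQuot p s) (𝓝[<] 1)
      (𝓝 (pgfSecondDiffQuot p 1 / pgfDiffQuot p 1)) := by
  have h1mem : (1 : ℝ) ∈ Icc (0 : ℝ) 1 := ⟨zero_le_one, le_rfl⟩
  have := (((continuousOn_pgfSecondDiffQuot hp hL2).continuousWithinAt h1mem).div
    ((continuousOn_pgfDiffQuot hp hL).continuousWithinAt h1mem) h1).mono Ico_subset_Icc_self
  rwa [ContinuousWithinAt, nhdsWithin_Ico_eq_nhdsLT zero_lt_one] at this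

theorem pgfDiffQuot_le (hp : ∀ l, 0 ≤ p l) (hL : Summable fun l : ℕ => l * p l)
    (hs : s ∈ Icc (0 : ℝ) 1) : pgfDiffQuot p s ≤ ∑' l : ℕ, l * p l := by
  refine (summable_mul_geom_sum hp hL hs).tsum_le_tsum (fun l => ?_) hL
  rw [mul_comm (l : ℝ)]
  exact mul_le_mul_of_nonneg_left (geom_sum_le_of_mem_Icc hs l) (hp l)

theorem le_pgfDiffQuot (hp : ∀ l, 0 ≤ p l) (hL : Summable fun l : ℕ => l * p l)
    (hs : s ∈ Icc (0 : ℝ) 1) {k : ℕ} (hk : 1 ≤ k) : p k ≤ pgfDiffQuot p s := by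
  have hone : 1 ≤ ∑ i ∈ range k, s ^ i := by
    simpa using single_le_sum (fun i _ => pow_nonneg hs.1 i) (mem_range.mpr hk)
  calc p k ≤ p k * ∑ i ∈ range k, s ^ i := le_mul_of_one_le_right (hp k) hone
    _ ≤ pgfDiffQuot p s :=
      (summable_mul_geom_sum hp hL hs).le_tsum k fun l _ =>
        mul_nonneg (hp l) (by have := hs.1; positivity)

theorem le_pgfSecondDiffQuot (hp : ∀ l, 0 ≤ p l)
    (hL2 : Summable fun l : ℕ => (l : ℝ) ^ 2 * p l) (hs : s ∈ Icc (0 : ℝ) 1) {k : ℕ} (hk : 2 ≤ k) :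
    p k ≤ pgfSecondDiffQuot p s := by
  have hone : 1 ≤ ∑ j ∈ range k, ∑ i ∈ range j, s ^ i := by
    simpa using single_le_sum (f := fun j => ∑ i ∈ range j, s ^ i)
      (fun j _ => by have := hs.1; positivity) (mem_range.mpr hk)
  calc p k ≤ p k * ∑ j ∈ range k, ∑ i ∈ range j, s ^ i := le_mul_of_one_le_right (hp k) hone
    _ ≤ pgfSecondDiffQuot p s :=
      (summable_mul_sum_geom_sum hp hL2 hs).le_tsum k fun l _ =>
        mul_nonneg (hp l) (by have := hs.1; positivity)

end DiffQuot

theorem exists_two_le_pos_of_tsum_pos {p : ℕ → ℝ} (hp : ∀ l, 0 ≤ p l)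
    (h : 0 < ∑' l : ℕ, (l : ℝ) * (l - 1) * p l) : ∃ k, 2 ≤ k ∧ 0 < p k := by
  by_contra! hle
  have hzero : ∀ l : ℕ, (l : ℝ) * (l - 1) * p l = 0 := by
    intro l
    rcases lt_or_ge l 2 with hl | hl
    · interval_cases l <;> simp
    · simp [le_antisymm (hle l hl) (hp l)]
  simp [hzero] at h

theorem stmt14_general (p : ℕ → ℝ) (hp : ∀ l, 0 ≤ p l) (hsum : ∑' l, p l = 1)
    (f : ℝ → ℝ) (hf : ∀ s : ℝ, f s = ∑' l : ℕ, p l * s ^ l)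
    (hmean : ∑' l : ℕ, (l : ℝ) * p l = 1)
    (σ2 : ℝ) (hσ2 : σ2 = ∑' l : ℕ, (l : ℝ) * ((l : ℝ) - 1) * p l)
    (hσpos : 0 < σ2)
    (hs2 : Summable fun l : ℕ => (l : ℝ) ^ 2 * p l) :
    Filter.Tendsto (fun n : ℕ => (n : ℝ) * (1 - f^[n] 0)) Filter.atTop (nhds (2 / σ2)) := by
  have hP : Summable p := summable_of_tsum_ne_zero (hsum ▸ one_ne_zero)
  have hL : Summable fun l : ℕ => (l : ℝ) * p l := summable_of_tsum_ne_zero (hmean ▸ one_ne_zero)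
  obtain ⟨k, hk, hpk⟩ := exists_two_le_pos_of_tsum_pos hp (hσ2 ▸ hσpos)
  set A := pgfDiffQuot p
  set B := pgfSecondDiffQuot p
  have hfA : ∀ s ∈ Ico (0 : ℝ) 1, 1 - f s = (1 - s) * A s := fun s hs => by
    rw [hf]
    simpa only [hsum] using tsum_sub_tsum_mul_pow_eq_mul_pgfDiffQuot hp hP (Ico_subset_Icc_self hs)
  have hAB : ∀ s ∈ Ico (0 : ℝ) 1, 1 - A s = (1 - s) * B s := fun s hs => by
    simpa only [hmean] using
      tsum_mul_sub_pgfDiffQuot_eq_mul_pgfSecondDiffQuot hp hL (Ico_subset_Icc_self hs)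
  have hApos : ∀ s ∈ Ico (0 : ℝ) 1, 0 < A s := fun s hs =>
    hpk.trans_le (le_pgfDiffQuot hp hL (Ico_subset_Icc_self hs) (by omega))
  have hmaps : MapsTo f (Ico 0 1) (Ico 0 1) := fun s hs =>
    ⟨hf s ▸ tsum_nonneg fun l => mul_nonneg (hp l) (pow_nonneg hs.1 l),
      by nlinarith [hfA s hs, hApos s hs, hs.2]⟩
  have hcg : ∀ s ∈ Ico (0 : ℝ) 1, p k ≤ B s / A s := fun s hs => by
    have hBk := le_pgfSecondDiffQuot hp hs2 (Ico_subset_Icc_self hs) hk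
    have hA1 := hmean ▸ pgfDiffQuot_le hp hL (Ico_subset_Icc_self hs)
    exact hBk.trans (le_div_self (hpk.le.trans hBk) (hApos s hs) hA1)
  have hlim : Tendsto (fun s => B s / A s) (𝓝[<] 1) (𝓝 (σ2 / 2)) := by
    simpa only [pgfDiffQuot_one, pgfSecondDiffQuot_one, hmean, ← hσ2, div_one] using
      tendsto_pgfSecondDiffQuot_div_pgfDiffQuot hp hL hs2 (by simp [pgfDiffQuot_one, hmean])
  rw [← inv_div]
  exact tendsto_natCast_mul_one_sub_iterate hpk (by positivity) hmaps
    (fun s hs => inv_one_sub_sub_inv_one_sub hs.2.ne (hApos s hs).ne' (hfA s hs) (hAB s hs))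
    hcg hlim

theorem stmt14 (p : ℕ → ℝ) (hp : ∀ l, 0 ≤ p l) (hsum : ∑' l, p l = 1)
    (f : ℝ → ℝ) (hf : ∀ s : ℝ, f s = ∑' l : ℕ, p l * s ^ l)
    (hmean : ∑' l : ℕ, (l : ℝ) * p l = 1)
    (σ2 : ℝ) (hσ2 : σ2 = ∑' l : ℕ, (l : ℝ) * ((l : ℝ) - 1) * p l)
    (hσpos : 0 < σ2)
    (hs2 : Summable fun l : ℕ => (l : ℝ) ^ 2 * p l)
    (hp1 : p 1 ≠ 1) :
    Filter.Tendsto (fun n : ℕ => (n : ℝ) * (1 - f^[n] 0)) Filter.atTop (nhds (2 / σ2)) :=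
  stmt14_general p hp hsum f hf hmean σ2 hσ2 hσpos hs2
end
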